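/- (Extremum inequalities, second-order bound.) Let a > 0, c > 0 and σ ≤ μ < 0. Let u be a solution of the SDDE, let M ∈ [M₀, 0) and N > 0, set τ = a + c·N, and suppose t* > 3τ satisfies u(s) ∈ [M, N] for all s ∈ [t* − 3τ, t*] and u'(t*) = 0. Set v = u(t*). Then: if v < 0 then Q₂(v, N, M) ≥ 0, and if v > 0 then Q₂(v, M, N) ≤ 0. -/

import Mathlib

open Real Set Filter

/-- `M₀ = -a/c`. -/
noncomputable def Mzero (a c : ℝ) : ℝ := -a / c

/-- `N₀ = aσ/(cμ)`. -/
noncomputable def Nzero (a c μ σ : ℝ) : ℝ := a * σ / (c * μ)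

/-- A solution of the SDDE `u'(t) = μ u(t) + σ u(t - a - c u(t))` with history `φ`:
a continuous function equal to `φ` on `(-∞,0]`, differentiable on `(0,∞)` with
continuous derivative there, satisfying the SDDE for all `t > 0`. -/
def IsSDDESolution (a c μ σ : ℝ) (φ u : ℝ → ℝ) : Prop :=
  Continuous u ∧ (∀ t ≤ (0:ℝ), u t = φ t) ∧
  ContinuousOn (deriv u) (Set.Ioi (0:ℝ)) ∧
  ∀ t > (0:ℝ), HasDerivAt u (μ * u t + σ * u (t - a - c * u t)) t

/-- `Q₁(v,x) = (1 + (μ/σ) e^{μ(a+cv)}) v + (σ/μ) x (1 - e^{μ(a+cv)})`. -/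
noncomputable def Qone (a c μ σ v x : ℝ) : ℝ :=
  (1 + (μ / σ) * Real.exp (μ * (a + c * v))) * v +
    (σ / μ) * x * (1 - Real.exp (μ * (a + c * v)))

/-- `D(x,y) = (|μ|+|σ|)(1 + (|μ|+|σ|) max(|x|,|y|) c) max(|x|,|y|)`. -/
noncomputable def Dfun (c μ σ x y : ℝ) : ℝ :=
  (|μ| + |σ|) * (1 + (|μ| + |σ|) * max |x| |y| * c) * max |x| |y|

/-- The piecewise function `Q₂(v,x,y)`. -/
noncomputable def Qtwo (a c μ σ v x y : ℝ) : ℝ :=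
  let s := Real.sign (y - x)
  let D := Dfun c μ σ x y
  if -s * (x + (μ / σ) * v) / D < a + c * v then
    (μ / σ) * v * Real.exp (μ * (a + c * v)) -
      (σ / μ) * (s * (D / μ) *
        (Real.exp (-μ * s * (x + (μ / σ) * v) / D) - 1) +
        x * Real.exp (μ * (a + c * v)))
  else
    v * Real.exp (μ * (a + c * v)) * (1 + μ / σ) -
      s * (σ / μ) * D *
        ((1 / μ) * (Real.exp (μ * (a + c * v)) - 1) -
          (a + c * v) * Real.exp (μ * (a + c * v)))

/-! At the critical point `t*` the equation gives `σ W + μ v = 0`, where `v = u t*`,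
`Δ = a + c v` and `W = u (t* - Δ)`. Variation of constants over `[t* - Δ, t*]` writes
`v - e^{μΔ} W` as `σ ∫₀^Δ e^{μr} w(t* - r) dr` with `w(s) = u (s - a - c u s)`. On that interval
`w` stays in `[M, N]` and is `D`-Lipschitz with `w(t*) = W`, so `w(t* - r)` is trapped between
`W ± D r` and the bound `x` of the branch. Since `σ < 0`, replacing `w` by this piecewise-linear
envelope moves the integral in a known direction, and the integral of the envelope against
`e^{μr}` is exactly the closed form `Q₂`. -/

lemma hasDerivAt_exp_const_mul (μ r : ℝ) :
    HasDerivAt (fun r => exp (μ * r)) (exp (μ * r) * μ) r :=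
  ((hasDerivAt_id r).const_mul μ).exp.congr_deriv (by simp)

lemma integral_exp_mul_affine {μ : ℝ} (hμ : μ ≠ 0) (W D p q : ℝ) :
    ∫ r in p..q, exp (μ * r) * (W + D * r)
      = (exp (μ * q) * (W + D * q) / μ - D * exp (μ * q) / μ ^ 2)
        - (exp (μ * p) * (W + D * p) / μ - D * exp (μ * p) / μ ^ 2) := by
  refine intervalIntegral.integral_eq_sub_of_hasDerivAt
    (f := fun r => exp (μ * r) * (W + D * r) / μ - D * exp (μ * r) / μ ^ 2) (fun r _ => ?_)
    ((by fun_prop : Continuous fun r => exp (μ * r) * (W + D * r)).intervalIntegrable _ _)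
  have hexp := hasDerivAt_exp_const_mul μ r
  have hlin : HasDerivAt (fun r => W + D * r) D r :=
    ((hasDerivAt_id r).const_mul D).const_add W |>.congr_deriv (by simp)
  refine (((hexp.mul hlin).div_const μ).sub
    ((hexp.const_mul D).div_const (μ ^ 2))).congr_deriv ?_
  field_simp
  ring

lemma integral_exp_mul_min_affine {μ D W X Δ : ℝ} (hμ : μ ≠ 0) (hD : 0 < D) (hWX : W ≤ X)
    (hΔ : 0 ≤ Δ) :
    ∫ r in (0:ℝ)..Δ, exp (μ * r) * min X (W + D * r)
      = if (X - W) / D < Δ then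
          (X * exp (μ * Δ) - W) / μ - D / μ ^ 2 * (exp (μ * ((X - W) / D)) - 1)
        else
          (exp (μ * Δ) * (W + D * Δ) - W) / μ - D / μ ^ 2 * (exp (μ * Δ) - 1) := by
  have hint (p q : ℝ) : IntervalIntegrable (fun r => exp (μ * r) * min X (W + D * r))
      MeasureTheory.volume p q := by
    apply Continuous.intervalIntegrable; fun_prop
  set r₀ := (X - W) / D with hr₀
  have hDr₀ : W + D * r₀ = X := by rw [hr₀]; field_simp; ring
  have affine_le {r : ℝ} (hr : r ≤ r₀) : W + D * r ≤ X := by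
    nlinarith
  split_ifs with h
  · have h₀ : 0 ≤ r₀ := div_nonneg (by linarith) hD.le
    rw [← intervalIntegral.integral_add_adjacent_intervals (hint 0 r₀) (hint r₀ Δ)]
    have e₁ : ∫ r in (0:ℝ)..r₀, exp (μ * r) * min X (W + D * r)
        = ∫ r in (0:ℝ)..r₀, exp (μ * r) * (W + D * r) := by
      refine intervalIntegral.integral_congr fun r hr => ?_
      rw [uIcc_of_le h₀] at hr
      simp only [min_eq_right (affine_le hr.2)]
    have e₂ : ∫ r in r₀..Δ, exp (μ * r) * min X (W + D * r)
        = ∫ r in r₀..Δ, exp (μ * r) * (X + 0 * r) := by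
      refine intervalIntegral.integral_congr fun r hr => ?_
      rw [uIcc_of_le h.le] at hr
      have : X ≤ W + D * r := by nlinarith [hr.1]
      simp only [min_eq_left this, zero_mul, add_zero]
    rw [e₁, e₂, integral_exp_mul_affine hμ, integral_exp_mul_affine hμ, hDr₀]
    field_simp
    simp only [mul_zero, exp_zero]
    ring
  · push Not at h
    rw [intervalIntegral.integral_congr (g := fun r => exp (μ * r) * (W + D * r)) fun r hr => by
      rw [uIcc_of_le hΔ] at hr
      simp only [min_eq_right (affine_le (hr.2.trans h))],
      integral_exp_mul_affine hμ]
    field_simp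
    simp only [mul_zero, exp_zero]
    ring

lemma Dfun_comm (c μ σ x y : ℝ) : Dfun c μ σ x y = Dfun c μ σ y x := by
  simp only [Dfun, max_comm]

lemma Dfun_pos {c μ σ x y : ℝ} (hc : 0 ≤ c) (hμ : μ ≠ 0) (hxy : x ≠ y) :
    0 < Dfun c μ σ x y := by
  have hK : 0 < max |x| |y| := by
    by_contra! h
    have hx : x = 0 := abs_nonpos_iff.mp ((le_max_left _ _).trans h)
    have hy : y = 0 := abs_nonpos_iff.mp ((le_max_right _ _).trans h)
    exact hxy (hx.trans hy.symm)
  have hL : 0 < |μ| + |σ| := by positivity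
  unfold Dfun
  positivity

/-- With `s = sign (y - x)`, the two branches of `Qtwo` are the two shapes of the envelope
`min (-s x) (-s W + D r)` on `[0, a + c v]`, according to whether it reaches its cap before
`a + c v`; `hW` identifies the `-(μ/σ) v` of `Qtwo` with `W`. -/
lemma sign_mul_Qtwo_eq {a c μ σ v W x y : ℝ} (hc : 0 ≤ c) (hμ : μ ≠ 0) (hσ : σ ≠ 0)
    (hxy : x ≠ y) (hW : σ * W + μ * v = 0) (hΔ : 0 ≤ a + c * v)
    (hWx : Real.sign (y - x) * x ≤ Real.sign (y - x) * W) :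
    Real.sign (y - x) * Qtwo a c μ σ v x y
      = Real.sign (y - x) * (v - exp (μ * (a + c * v)) * W)
        + σ * ∫ r in (0:ℝ)..a + c * v,
            exp (μ * r) *
              min (-Real.sign (y - x) * x) (-Real.sign (y - x) * W + Dfun c μ σ x y * r) := by
  have hs : Real.sign (y - x) * Real.sign (y - x) = 1 := by
    rcases Real.sign_apply_eq_of_ne_zero _ (sub_ne_zero.mpr hxy.symm) with h | h <;> simp [h]
  have hD : 0 < Dfun c μ σ x y := Dfun_pos hc hμ hxy
  have hμv : μ / σ * v = -W := by field_simp; linarith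
  rw [integral_exp_mul_min_affine hμ hD (by linarith) hΔ]
  simp only [Qtwo, hμv]
  generalize Real.sign (y - x) = s at *
  generalize Dfun c μ σ x y = D at *
  generalize a + c * v = Δ at *
  obtain rfl : v = -(σ * W) / μ := by field_simp; linarith
  rw [show (-s * x - -s * W) / D = -s * (x + -W) / D by ring,
    show -μ * s * (x + -W) / D = μ * (-s * (x + -W) / D) by ring]
  generalize exp (μ * Δ) = E
  generalize exp (μ * (-s * (x + -W) / D)) = F
  split_ifs
  · field_simp
    linear_combination σ * D * (1 - F) * hs
  · field_simp
    linear_combination σ * D * (μ * E * Δ - E + 1) * hs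

lemma sign_mul_Qtwo_nonpos {a c μ σ v W x y : ℝ} {w : ℝ → ℝ} (hc : 0 ≤ c) (hμ : μ ≠ 0)
    (hσ : σ < 0) (hxy : x ≠ y) (hW : σ * W + μ * v = 0) (hΔ : 0 ≤ a + c * v) (hw : Continuous w)
    (hvoc : v - exp (μ * (a + c * v)) * W = σ * ∫ r in (0:ℝ)..a + c * v, exp (μ * r) * w r)
    (hwx : ∀ r ∈ Icc 0 (a + c * v), Real.sign (y - x) * x ≤ Real.sign (y - x) * w r)
    (hlip : ∀ r ∈ Icc 0 (a + c * v), |w r - W| ≤ Dfun c μ σ x y * r) :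
    Real.sign (y - x) * Qtwo a c μ σ v x y ≤ 0 := by
  have hw₀ : w 0 = W := by
    simpa [sub_eq_zero] using hlip 0 ⟨le_rfl, hΔ⟩
  rw [sign_mul_Qtwo_eq hc hμ hσ.ne hxy hW hΔ (hw₀ ▸ hwx 0 ⟨le_rfl, hΔ⟩), hvoc]
  set s := Real.sign (y - x)
  set D := Dfun c μ σ x y
  have hs : s = -1 ∨ s = 1 := Real.sign_apply_eq_of_ne_zero _ (sub_ne_zero.mpr hxy.symm)
  have hint : ∫ r in (0:ℝ)..a + c * v, exp (μ * r) * (s * w r + min (-s * x) (-s * W + D * r))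
      = s * (∫ r in (0:ℝ)..a + c * v, exp (μ * r) * w r)
        + ∫ r in (0:ℝ)..a + c * v, exp (μ * r) * min (-s * x) (-s * W + D * r) := by
    rw [← intervalIntegral.integral_const_mul, ← intervalIntegral.integral_add]
    · congr 1; ext r; ring
    all_goals apply Continuous.intervalIntegrable; fun_prop
  have hnonneg : 0 ≤ ∫ r in (0:ℝ)..a + c * v,
      exp (μ * r) * (s * w r + min (-s * x) (-s * W + D * r)) := by
    refine intervalIntegral.integral_nonneg hΔ fun r hr => mul_nonneg (exp_pos _).le ?_
    have hlipr := abs_le.mp (hlip r hr)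
    have hwxr := hwx r hr
    rcases hs with hs | hs <;> rw [hs] at hwxr ⊢ <;>
      exact neg_le_iff_add_nonneg'.mp (le_min (by linarith) (by linarith))
  rw [hint] at hnonneg
  linarith [mul_nonpos_of_nonpos_of_nonneg hσ.le hnonneg]

section SDDE

variable {a c μ σ : ℝ} {u : ℝ → ℝ}

lemma sdde_variation_of_constants (hcont : Continuous u)
    (hde : ∀ t > (0:ℝ), HasDerivAt u (μ * u t + σ * u (t - a - c * u t)) t) {T Δ : ℝ}
    (hΔ : 0 ≤ Δ) (hΔT : Δ < T) :
    u T - exp (μ * Δ) * u (T - Δ)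
      = σ * ∫ r in (0:ℝ)..Δ, exp (μ * r) * u (T - r - a - c * u (T - r)) := by
  have hFTC := intervalIntegral.integral_eq_sub_of_hasDerivAt
    (f := fun r => exp (μ * r) * u (T - r))
    (f' := fun r => -σ * (exp (μ * r) * u (T - r - a - c * u (T - r)))) (a := 0) (b := Δ)
    (fun r hr => by
      rw [uIcc_of_le hΔ] at hr
      have hu := (hde (T - r) (by linarith [hr.2])).comp_const_sub T r
      refine ((hasDerivAt_exp_const_mul μ r).mul hu).congr_deriv ?_
      ring)
    (by apply Continuous.intervalIntegrable; fun_prop)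
  rw [intervalIntegral.integral_const_mul] at hFTC
  simp only [mul_zero, exp_zero, one_mul, sub_zero] at hFTC
  linarith

lemma delay_mem_Icc (hc : 0 ≤ c) {M N s : ℝ} (hs : u s ∈ Icc M N) :
    s - a - c * u s ∈ Icc (s - (a + c * N)) (s - (a + c * M)) :=
  ⟨by nlinarith [hs.2], by nlinarith [hs.1]⟩

lemma abs_sdde_rhs_le {M N p : ℝ} (hp : u p ∈ Icc M N) (hq : u (p - a - c * u p) ∈ Icc M N) :
    |μ * u p + σ * u (p - a - c * u p)| ≤ (|μ| + |σ|) * max |M| |N| :=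
  calc |μ * u p + σ * u (p - a - c * u p)|
      ≤ |μ| * |u p| + |σ| * |u (p - a - c * u p)| := by
        simpa only [abs_mul] using abs_add_le (μ * u p) (σ * u (p - a - c * u p))
    _ ≤ |μ| * max |M| |N| + |σ| * max |M| |N| := by
        gcongr
        exacts [abs_le_max_abs_abs hp.1 hp.2, abs_le_max_abs_abs hq.1 hq.2]
    _ = (|μ| + |σ|) * max |M| |N| := by ring

lemma hasDerivAt_delayed
    (hde : ∀ t > (0:ℝ), HasDerivAt u (μ * u t + σ * u (t - a - c * u t)) t) {r : ℝ}
    (hr : 0 < r) (hα : 0 < r - a - c * u r) :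
    HasDerivAt (fun r => u (r - a - c * u r))
      ((μ * u (r - a - c * u r) + σ * u (r - a - c * u r - a - c * u (r - a - c * u r)))
        * (1 - c * (μ * u r + σ * u (r - a - c * u r)))) r :=
  (hde _ hα).comp r (((hasDerivAt_id r).sub_const a).sub ((hde r hr).const_mul c))

/-- `Dfun` bounds the derivative `u'(s - a - c u s) (1 - c u'(s))` of the delayed term by
`L (1 + c L)` with `L = (|μ| + |σ|) max |M| |N|`: the window `[T - 3τ, T]` keeps every argument
of `u` involved in `[M, N]`. -/
lemma abs_delayed_sub_le
    (hde : ∀ t > (0:ℝ), HasDerivAt u (μ * u t + σ * u (t - a - c * u t)) t)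
    (hc : 0 ≤ c) {M N T : ℝ} (hM : 0 ≤ a + c * M) (hT : 3 * (a + c * N) < T)
    (hbd : ∀ s ∈ Icc (T - 3 * (a + c * N)) T, u s ∈ Icc M N) {s : ℝ}
    (hs : s ∈ Icc (T - (a + c * N)) T) :
    |u (s - a - c * u s) - u (T - a - c * u T)| ≤ Dfun c μ σ M N * (T - s) := by
  set τ := a + c * N
  set L := (|μ| + |σ|) * max |M| |N|
  have hτ : 0 ≤ τ := by linarith [hs.1, hs.2]
  have hdelay {p : ℝ} (hp : p ∈ Icc (T - 3 * τ) T) :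
      p - a - c * u p ∈ Icc (p - τ) p := by
    have := delay_mem_Icc (a := a) hc (hbd p hp)
    exact ⟨this.1, by linarith [this.2]⟩
  have hrhs {p : ℝ} (hp : p ∈ Icc (T - 2 * τ) T) :
      0 < p - a - c * u p ∧ |μ * u p + σ * u (p - a - c * u p)| ≤ L := by
    have hp' : p ∈ Icc (T - 3 * τ) T := ⟨by linarith [hp.1], hp.2⟩
    have hq := hdelay hp'
    exact ⟨by linarith [hq.1, hp.1],
      abs_sdde_rhs_le (hbd p hp') (hbd _ ⟨by linarith [hq.1, hp.1], by linarith [hq.2, hp.2]⟩)⟩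
  have hdelayed_deriv : ∀ r ∈ Icc (T - τ) T, HasDerivWithinAt (fun r => u (r - a - c * u r))
      ((μ * u (r - a - c * u r) + σ * u (r - a - c * u r - a - c * u (r - a - c * u r)))
        * (1 - c * (μ * u r + σ * u (r - a - c * u r)))) (Icc (T - τ) T) r := fun r hr =>
    (hasDerivAt_delayed hde (by linarith [hr.1])
      (hrhs ⟨by linarith [hr.1], hr.2⟩).1).hasDerivWithinAt
  have hbound : ∀ r ∈ Icc (T - τ) T,
      ‖(μ * u (r - a - c * u r) + σ * u (r - a - c * u r - a - c * u (r - a - c * u r)))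
        * (1 - c * (μ * u r + σ * u (r - a - c * u r)))‖ ≤ Dfun c μ σ M N := by
    intro r hr
    have hα := hdelay ⟨by linarith [hr.1], hr.2⟩
    have hLα := (hrhs (p := r - a - c * u r) ⟨by linarith [hα.1, hr.1], by linarith [hα.2, hr.2]⟩).2
    have hLr := (hrhs ⟨by linarith [hr.1], hr.2⟩).2
    have hL : 0 ≤ L := by positivity
    have hinner : |1 - c * (μ * u r + σ * u (r - a - c * u r))| ≤ 1 + c * L :=
      calc |1 - c * (μ * u r + σ * u (r - a - c * u r))|
          ≤ |1| + |c * (μ * u r + σ * u (r - a - c * u r))| := abs_sub _ _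
        _ ≤ 1 + c * L := by rw [abs_one, abs_mul, abs_of_nonneg hc]; gcongr
    calc _ ≤ L * (1 + c * L) := by
          rw [Real.norm_eq_abs, abs_mul]
          exact mul_le_mul hLα hinner (abs_nonneg _) hL
      _ = Dfun c μ σ M N := by simp only [Dfun, L]; ring
  have := (convex_Icc (T - τ) T).norm_image_sub_le_of_norm_hasDerivWithin_le hdelayed_deriv hbound hs
    ⟨by linarith, le_rfl⟩
  rwa [Real.norm_eq_abs, Real.norm_eq_abs, abs_sub_comm,
    abs_of_nonneg (sub_nonneg.mpr hs.2)] at this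

theorem sign_mul_Qtwo_nonpos_of_deriv_eq_zero (hcont : Continuous u)
    (hde : ∀ t > (0:ℝ), HasDerivAt u (μ * u t + σ * u (t - a - c * u t)) t)
    (hc : 0 ≤ c) (hμ : μ ≠ 0) (hσ : σ < 0) {M N T x y : ℝ} (hM : 0 ≤ a + c * M) (hMN : M < N)
    (hT : 3 * (a + c * N) < T) (hbd : ∀ s ∈ Icc (T - 3 * (a + c * N)) T, u s ∈ Icc M N)
    (hderiv : deriv u T = 0) (hxy : x = M ∧ y = N ∨ x = N ∧ y = M) :
    Real.sign (y - x) * Qtwo a c μ σ (u T) x y ≤ 0 := by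
  have hτ : 0 ≤ a + c * N := by nlinarith
  have hv := hbd T ⟨by linarith, le_rfl⟩
  have hΔ : 0 ≤ a + c * u T := by nlinarith [hv.1]
  have hΔτ : a + c * u T ≤ a + c * N := by nlinarith [hv.2]
  have hdelay : T - (a + c * u T) = T - a - c * u T := by ring
  have hW : σ * u (T - (a + c * u T)) + μ * u T = 0 := by
    rw [← hderiv, (hde T (by linarith)).deriv, hdelay]; ring
  have hwMN : ∀ r ∈ Icc 0 (a + c * u T), u (T - r - a - c * u (T - r)) ∈ Icc M N :=
    fun r hr => by
      have := delay_mem_Icc (a := a) hc (hbd (T - r) ⟨by linarith [hr.2], by linarith [hr.1]⟩)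
      exact hbd _ ⟨by linarith [this.1, hr.2], by linarith [this.2, hr.1]⟩
  have hlip : ∀ r ∈ Icc 0 (a + c * u T),
      |u (T - r - a - c * u (T - r)) - u (T - (a + c * u T))| ≤ Dfun c μ σ M N * r :=
    fun r hr => by
      simpa [hdelay] using abs_delayed_sub_le hde hc hM hT hbd (s := T - r)
        ⟨by linarith [hr.2], by linarith [hr.1]⟩
  have hx : ∀ w ∈ Icc M N, Real.sign (y - x) * x ≤ Real.sign (y - x) * w := by
    rcases hxy with ⟨rfl, rfl⟩ | ⟨rfl, rfl⟩ <;> intro w hw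
    · rw [Real.sign_of_pos (sub_pos.mpr hMN)]; linarith [hw.1]
    · rw [Real.sign_of_neg (sub_neg.mpr hMN)]; linarith [hw.2]
  have hD : Dfun c μ σ x y = Dfun c μ σ M N := by
    rcases hxy with ⟨rfl, rfl⟩ | ⟨rfl, rfl⟩
    exacts [rfl, Dfun_comm _ _ _ _ _]
  refine sign_mul_Qtwo_nonpos hc hμ hσ ?_ hW hΔ (by fun_prop)
    (sdde_variation_of_constants hcont hde hΔ (by linarith)) (fun r hr => hx _ (hwMN r hr))
    (hD ▸ hlip)
  rcases hxy with ⟨rfl, rfl⟩ | ⟨rfl, rfl⟩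
  exacts [hMN.ne, hMN.ne']

end SDDE

theorem sdde_extremum_Q2_general
    (a c μ σ M N τ : ℝ) (φ u : ℝ → ℝ) (tstar : ℝ)
    (hc : 0 < c) (hσμ : σ ≤ μ) (hμ : μ < 0)
    (hu : IsSDDESolution a c μ σ φ u)
    (hM : M ∈ Set.Ico (Mzero a c) (0:ℝ)) (hN : 0 < N) (hτ : τ = a + c * N)
    (ht : 3 * τ < tstar)
    (hbd : ∀ s ∈ Set.Icc (tstar - 3 * τ) tstar, u s ∈ Set.Icc M N)
    (hderiv : deriv u tstar = 0) :
    (u tstar < 0 → 0 ≤ Qtwo a c μ σ (u tstar) N M) ∧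
      (0 < u tstar → Qtwo a c μ σ (u tstar) M N ≤ 0) := by
  obtain ⟨hcont, -, -, hde⟩ := hu
  subst hτ
  have hcM : 0 ≤ a + c * M := by
    have := (div_le_iff₀ hc).mp hM.1
    linarith
  have hMN : M < N := hM.2.trans hN
  have key (x y : ℝ) (hxy : x = M ∧ y = N ∨ x = N ∧ y = M) :=
    sign_mul_Qtwo_nonpos_of_deriv_eq_zero hcont hde hc.le hμ.ne (hσμ.trans_lt hμ) hcM hMN ht
      hbd hderiv hxy
  refine ⟨fun _ => ?_, fun _ => ?_⟩
  · have h := key N M (.inr ⟨rfl, rfl⟩)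
    rw [Real.sign_of_neg (sub_neg.mpr hMN)] at h
    linarith
  · have h := key M N (.inl ⟨rfl, rfl⟩)
    rw [Real.sign_of_pos (sub_pos.mpr hMN)] at h
    linarith

/-- Extremum inequalities, second-order bound. -/
theorem sdde_extremum_Q2
    (a c μ σ M N τ : ℝ) (φ u : ℝ → ℝ) (tstar : ℝ)
    (ha : 0 < a) (hc : 0 < c) (hσμ : σ ≤ μ) (hμ : μ < 0)
    (hu : IsSDDESolution a c μ σ φ u)
    (hM : M ∈ Set.Ico (Mzero a c) (0:ℝ)) (hN : 0 < N) (hτ : τ = a + c * N)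
    (ht : 3 * τ < tstar)
    (hbd : ∀ s ∈ Set.Icc (tstar - 3 * τ) tstar, u s ∈ Set.Icc M N)
    (hderiv : deriv u tstar = 0) :
    (u tstar < 0 → 0 ≤ Qtwo a c μ σ (u tstar) N M) ∧
      (0 < u tstar → Qtwo a c μ σ (u tstar) M N ≤ 0) :=
  sdde_extremum_Q2_general a c μ σ M N τ φ u tstar hc hσμ hμ hu hM hN hτ ht hbd hderiv
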